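/- Fix a real θ>0, a real λ with 0<λ≤1/(1+√θ)², an integer B≥1, and a prior variance V∈(0,1]. Define F∞(t,S_M) := V/(1+V·t·S_M) + λ·t·(1+θ·S_M) for integers t≥0 and reals S_M≥0. (i) If V > v_th∞(λ), then the pair (1, 1/√(λθ) − 1/V) is a global minimizer of F∞ over {0,1,…,B}×[0,∞). (ii) If V < v_th∞(λ), then (0,0) is a global minimizer of F∞ over {0,1,…,B}×[0,∞), i.e., F∞(t,S_M) ≥ V for all such (t,S_M). -/

import Mathlib

/-!
With `x = 1 + V t S_M ≥ 1` the cost reads `F∞ = V / x + λθ (x - 1) / V + λ t`, so AM–GM in `x`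
gives `F∞ ≥ 2√(λθ) - λθ / V + λ t`, with equality at `t = 1`, `x = V / √(λθ)`. Comparing this
value with `F∞(0, ·) = V` amounts to the sign of `(V - √(λθ))² - λ V`, a quadratic in `V` whose
larger root is `v_th∞(λ)`. When `V ≤ √(λθ)` the cost is increasing in `x`, hence at least `V`.
-/

open Real

/-- Coordinated myopic cost in the limit `S_A = ∞`. -/
noncomputable def Finf (th lam V : ℝ) (t : ℕ) (SM : ℝ) : ℝ :=
  V / (1 + V * (t : ℝ) * SM) + lam * (t : ℝ) * (1 + th * SM)

/-- The `S_A = ∞` threshold `v_th∞(λ)`. -/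
noncomputable def vthinf (th lam : ℝ) : ℝ :=
  Real.sqrt (lam * th) + lam / 2 +
    Real.sqrt lam * Real.sqrt (Real.sqrt (lam * th) + lam / 4)

lemma Finf_zero (th lam V SM : ℝ) : Finf th lam V 0 SM = V := by
  simp [Finf]

lemma Finf_eq_div_add_div {th lam V : ℝ} (hV : V ≠ 0) (t : ℕ) (SM : ℝ) :
    Finf th lam V t SM = V / (1 + V * t * SM) + lam * th * (V * t * SM) / V + lam * t := by
  unfold Finf
  field_simp
  ring

lemma two_sqrt_sub_add_le_Finf {th lam V : ℝ} (hlt : 0 ≤ lam * th) (hV : 0 < V)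
    (t : ℕ) {SM : ℝ} (hSM : 0 ≤ SM) :
    2 * √(lam * th) - lam * th / V + lam * t ≤ Finf th lam V t SM := by
  set s := √(lam * th)
  set x := 1 + V * t * SM
  have hs2 : s ^ 2 = lam * th := sq_sqrt hlt
  have hx : 0 < x := by positivity
  have amgm : 2 * s ≤ V / x + s ^ 2 * x / V := by
    rw [div_add_div _ _ hx.ne' hV.ne', le_div_iff₀ (by positivity)]
    nlinarith [sq_nonneg (V - s * x)]
  have hxV : lam * th * (V * t * SM) / V = s ^ 2 * x / V - lam * th / V := by
    rw [hs2]; ring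
  rw [Finf_eq_div_add_div hV.ne', hxV]
  linarith

lemma Finf_one_eq {th lam V : ℝ} (hlt : 0 < lam * th) (hV : 0 < V) :
    Finf th lam V 1 (1 / √(lam * th) - 1 / V) = 2 * √(lam * th) + lam - lam * th / V := by
  set s := √(lam * th)
  have hs2 : s ^ 2 = lam * th := sq_sqrt hlt.le
  have hs : 0 < s := sqrt_pos.2 hlt
  have hx : 1 + V * ((1 : ℕ) : ℝ) * (1 / s - 1 / V) = V / s := by
    field_simp
    ring
  rw [Finf, hx, div_div_cancel₀ hV.ne']
  field_simp
  linear_combination (-V) * hs2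

lemma le_Finf_of_sq_le {th lam V : ℝ} (hlam : 0 ≤ lam) (hV : 0 < V) (hV2 : V ^ 2 ≤ lam * th)
    (t : ℕ) {SM : ℝ} (hSM : 0 ≤ SM) : V ≤ Finf th lam V t SM := by
  set y := V * t * SM
  have hy : 0 ≤ y := by positivity
  have hdecomp : Finf th lam V t SM - V - lam * t = y * (lam * th / V - V / (1 + y)) := by
    rw [Finf_eq_div_add_div hV.ne']
    field_simp
    ring
  have hV_le : V / (1 + y) ≤ lam * th / V := by
    rw [div_le_div_iff₀ (by positivity) hV]
    nlinarith
  linarith [mul_nonneg hy (sub_nonneg.2 hV_le), mul_nonneg hlam t.cast_nonneg]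

lemma sq_sub_sqrt_sub_mul_eq_sub_vthinf_mul {th lam : ℝ} (hlam : 0 ≤ lam) (V : ℝ) :
    (V - √(lam * th)) ^ 2 - lam * V =
      (V - vthinf th lam) * (V - √(lam * th) - lam / 2 + √lam * √(√(lam * th) + lam / 4)) := by
  have hq2 : (√lam * √(√(lam * th) + lam / 4)) ^ 2 = lam * √(lam * th) + lam ^ 2 / 4 := by
    rw [mul_pow, sq_sqrt hlam, sq_sqrt (by positivity)]
    ring
  unfold vthinf
  linear_combination hq2

lemma sq_sub_sqrt_sub_mul_eq_mul_sub {th lam : ℝ} (hlt : 0 ≤ lam * th) {V : ℝ} (hV : V ≠ 0) :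
    (V - √(lam * th)) ^ 2 - lam * V = V * (V - (2 * √(lam * th) + lam - lam * th / V)) := by
  have hs2 : √(lam * th) ^ 2 = lam * th := sq_sqrt hlt
  field_simp
  linear_combination hs2

lemma two_sqrt_add_sub_lt_of_vthinf_lt {th lam V : ℝ} (hlam : 0 ≤ lam) (hlt : 0 ≤ lam * th)
    (hV : vthinf th lam < V) : 2 * √(lam * th) + lam - lam * th / V < V := by
  have hq : 0 ≤ √lam * √(√(lam * th) + lam / 4) := by positivity
  have hV0 : 0 < V := lt_of_le_of_lt (by unfold vthinf; positivity) hV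
  have hprod : 0 < (V - √(lam * th)) ^ 2 - lam * V := by
    rw [sq_sub_sqrt_sub_mul_eq_sub_vthinf_mul hlam]
    refine mul_pos (sub_pos.2 hV) ?_
    unfold vthinf at hV
    linarith
  rw [sq_sub_sqrt_sub_mul_eq_mul_sub hlt hV0.ne'] at hprod
  exact sub_pos.1 (pos_of_mul_pos_right hprod hV0.le)

lemma le_two_sqrt_add_sub_of_lt_vthinf {th lam V : ℝ} (hlam : 0 ≤ lam) (hlt : 0 ≤ lam * th)
    (hsV : √(lam * th) < V) (hV : V < vthinf th lam) :
    V ≤ 2 * √(lam * th) + lam - lam * th / V := by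
  have hV0 : 0 < V := (sqrt_nonneg _).trans_lt hsV
  have hq : lam / 2 ≤ √lam * √(√(lam * th) + lam / 4) := by
    rw [← sqrt_mul hlam]
    apply le_sqrt_of_sq_le
    nlinarith [sqrt_nonneg (lam * th)]
  have hprod : (V - √(lam * th)) ^ 2 - lam * V ≤ 0 := by
    rw [sq_sub_sqrt_sub_mul_eq_sub_vthinf_mul hlam]
    exact mul_nonpos_of_nonpos_of_nonneg (sub_nonpos.2 hV.le) (by linarith)
  rw [sq_sub_sqrt_sub_mul_eq_mul_sub hlt hV0.ne'] at hprod
  exact sub_nonpos.1 (nonpos_of_mul_nonpos_right hprod hV0)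

theorem stmt_5_general (th lam V : ℝ) (hth : 0 < th) (hlam : 0 < lam)
    (B : ℕ) (hV0 : 0 < V) :
    (V > vthinf th lam →
      ∀ t : ℕ, t ≤ B → ∀ SM : ℝ, 0 ≤ SM →
        Finf th lam V t SM ≥ Finf th lam V 1 (1 / Real.sqrt (lam * th) - 1 / V)) ∧
    (V < vthinf th lam →
      ∀ t : ℕ, t ≤ B → ∀ SM : ℝ, 0 ≤ SM → Finf th lam V t SM ≥ V) := by
  have hlt : 0 < lam * th := mul_pos hlam hth
  have hFinf_ge {t : ℕ} (ht : 0 < t) {SM : ℝ} (hSM : 0 ≤ SM) :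
      2 * √(lam * th) + lam - lam * th / V ≤ Finf th lam V t SM := by
    have hlam_le : lam ≤ lam * t := le_mul_of_one_le_right hlam.le (by exact_mod_cast ht)
    linarith [two_sqrt_sub_add_le_Finf hlt.le hV0 t hSM]
  constructor
  · intro hV t _ SM hSM
    rw [ge_iff_le, Finf_one_eq hlt hV0]
    rcases t.eq_zero_or_pos with rfl | ht
    · rw [Finf_zero]
      exact (two_sqrt_add_sub_lt_of_vthinf_lt hlam.le hlt.le hV).le
    · exact hFinf_ge ht hSM
  · intro hV t _ SM hSM
    rcases le_or_gt V √(lam * th) with hVs | hsV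
    · refine le_Finf_of_sq_le hlam.le hV0 ?_ t hSM
      calc V ^ 2 ≤ √(lam * th) ^ 2 := pow_le_pow_left₀ hV0.le hVs 2
        _ = lam * th := sq_sqrt hlt.le
    · rcases t.eq_zero_or_pos with rfl | ht
      · exact (Finf_zero th lam V SM).ge
      · exact (le_two_sqrt_add_sub_of_lt_vthinf hlam.le hlt.le hsV hV).trans (hFinf_ge ht hSM)

/-- for `0 < λ ≤ 1/(1+√θ)²`:
(i) if `V > v_th∞(λ)`, then `(1, 1/√(λθ) − 1/V)` globally minimizes `F∞`
over `{0,…,B}×[0,∞)`;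
(ii) if `V < v_th∞(λ)`, then `(0,0)` does, i.e. `F∞(t,S_M) ≥ V`. -/
theorem stmt_5 (th lam V : ℝ) (hth : 0 < th) (hlam : 0 < lam)
    (hle : lam ≤ 1 / (1 + Real.sqrt th) ^ 2)
    (B : ℕ) (hB : 1 ≤ B) (hV0 : 0 < V) (hV1 : V ≤ 1) :
    (V > vthinf th lam →
      ∀ t : ℕ, t ≤ B → ∀ SM : ℝ, 0 ≤ SM →
        Finf th lam V t SM ≥ Finf th lam V 1 (1 / Real.sqrt (lam * th) - 1 / V)) ∧
    (V < vthinf th lam →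
      ∀ t : ℕ, t ≤ B → ∀ SM : ℝ, 0 ≤ SM → Finf th lam V t SM ≥ V) :=
  stmt_5_general th lam V hth hlam B hV0
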